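/- arXiv:2404.18623 — 6 statements merged into one kernel-verified Lean document; each statement's English description precedes it below -/
import Mathlib

section
/- If f(z) = Σ_{k=0}^∞ a_k z^k is holomorphic on the unit disk with |f(z)| ≤ 1 for all |z| < 1, then Σ_{k=0}^∞ |a_k| r^k ≤ 1 for all 0 ≤ r ≤ 1/3. -/
/-!
Wiener's inequality `‖a n‖ ≤ 1 - ‖a 0‖ ^ 2` for `n ≥ 1` does all the work. For `n = 1` it is the
Schwarz lemma applied to `f` followed by the disk automorphism `w ↦ (w - a 0) / (1 - conj (a 0) w)`.
For general `n`, averaging `f` over the rotations `z ↦ ζ ^ j * z` by the `n`-th roots of unity kills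
every coefficient whose index is not a multiple of `n`, leaving a function `G (z ^ n)` with
`G w = ∑ a (n m) w ^ m` still bounded by `1`; the case `n = 1` applied to `G` gives the bound.
Summing, `∑ ‖a k‖ r ^ k ≤ A + (1 - A ^ 2) r / (1 - r) ≤ A + (1 - A ^ 2) / 2 ≤ 1` for `r ≤ 1 / 3`,
where `A = ‖a 0‖`.
-/

open Metric Set Filter Topology Finset FormalMultilinearSeries ComplexConjugate

lemma norm_sq_one_sub_conj_mul_sub_norm_sq_sub (u v : ℂ) :
    ‖1 - conj u * v‖ ^ 2 - ‖v - u‖ ^ 2 = (1 - ‖u‖ ^ 2) * (1 - ‖v‖ ^ 2) := by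
  simp only [← Complex.normSq_eq_norm_sq, Complex.normSq_apply, Complex.sub_re, Complex.sub_im,
    Complex.mul_re, Complex.mul_im, Complex.one_re, Complex.one_im, Complex.conj_re,
    Complex.conj_im]
  ring

lemma one_sub_conj_mul_ne_zero {u v : ℂ} (hu : ‖u‖ < 1) (hv : ‖v‖ ≤ 1) : 1 - conj u * v ≠ 0 := by
  refine sub_ne_zero.mpr fun h => ?_
  have : ‖conj u * v‖ < 1 := by
    rw [norm_mul, Complex.norm_conj]
    nlinarith [norm_nonneg u, norm_nonneg v]
  simp [← h] at this

lemma norm_mobius_le_one {u v : ℂ} (hu : ‖u‖ < 1) (hv : ‖v‖ ≤ 1) :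
    ‖(v - u) / (1 - conj u * v)‖ ≤ 1 := by
  rw [norm_div, div_le_one (norm_pos_iff.mpr (one_sub_conj_mul_ne_zero hu hv))]
  refine (pow_le_pow_iff_left₀ (norm_nonneg _) (norm_nonneg _) two_ne_zero).mp ?_
  have hu2 : 0 ≤ 1 - ‖u‖ ^ 2 := by nlinarith [norm_nonneg u]
  have hv2 : 0 ≤ 1 - ‖v‖ ^ 2 := by nlinarith [norm_nonneg v]
  linarith [norm_sq_one_sub_conj_mul_sub_norm_sq_sub u v, mul_nonneg hu2 hv2]

lemma norm_deriv_zero_le_one_sub_norm_sq {g : ℂ → ℂ} (hd : DifferentiableOn ℂ g (ball 0 1))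
    (hg : MapsTo g (ball 0 1) (closedBall 0 1)) : ‖deriv g 0‖ ≤ 1 - ‖g 0‖ ^ 2 := by
  have h0 : (0 : ℂ) ∈ ball (0 : ℂ) 1 := mem_ball_self one_pos
  have hg1 : ∀ w ∈ ball (0 : ℂ) 1, ‖g w‖ ≤ 1 := fun w hw => by simpa using hg hw
  rcases (hg1 0 h0).lt_or_eq with hu | hu
  · set u := g 0
    set h : ℂ → ℂ := fun w => (g w - u) / (1 - conj u * g w)
    have hden : ∀ w ∈ ball (0 : ℂ) 1, 1 - conj u * g w ≠ 0 := fun w hw =>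
      one_sub_conj_mul_ne_zero hu (hg1 w hw)
    have hdh : DifferentiableOn ℂ h (ball 0 1) :=
      (hd.sub_const u).div ((hd.const_mul _).const_sub 1) hden
    have hmaps : MapsTo h (ball 0 1) (closedBall (h 0) 1) := fun w hw => by
      simpa [h, u] using norm_mobius_le_one hu (hg1 w hw)
    have hderiv : HasDerivAt h (deriv g 0 / ((1 - ‖u‖ ^ 2 : ℝ) : ℂ)) 0 := by
      have hg0 : HasDerivAt g (deriv g 0) 0 :=
        (hd.differentiableAt (isOpen_ball.mem_nhds h0)).hasDerivAt
      refine ((hg0.sub_const u).div ((hg0.const_mul (conj u)).const_sub 1)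
        (hden 0 h0)).congr_deriv ?_
      rw [sub_self, zero_mul, sub_zero, pow_two, ← div_div, mul_div_cancel_right₀ _ (hden 0 h0),
        mul_comm (conj u), Complex.mul_conj']
      push_cast
      rfl
    have hpos : 0 < 1 - ‖u‖ ^ 2 := by nlinarith [norm_nonneg u]
    have hschwarz := Complex.norm_deriv_le_div_of_mapsTo_ball hdh hmaps one_pos
    rwa [hderiv.deriv, norm_div, Complex.norm_real, Real.norm_of_nonneg hpos.le, div_one,
      div_le_one hpos] at hschwarz
  · have hmax : IsLocalMax (norm ∘ g) 0 :=
      eventually_of_mem (isOpen_ball.mem_nhds h0) fun w hw => (hg1 w hw).trans hu.ge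
    have hconst : g =ᶠ[𝓝 0] fun _ => g 0 := Complex.eventually_eq_of_isLocalMax_norm
      (eventually_of_mem (isOpen_ball.mem_nhds h0) fun w hw =>
        hd.differentiableAt (isOpen_ball.mem_nhds hw)) hmax
    rw [hconst.deriv_eq, deriv_const, hu]
    simp

lemma IsPrimitiveRoot.sum_pow_pow {R : Type*} [CommRing R] [IsDomain R] {ζ : R} {n : ℕ}
    (hζ : IsPrimitiveRoot ζ n) (k : ℕ) :
    ∑ j ∈ range n, (ζ ^ j) ^ k = if n ∣ k then (n : R) else 0 := by
  simp_rw [← pow_mul, mul_comm _ k, pow_mul]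
  split_ifs with hk
  · simp [(hζ.pow_eq_one_iff_dvd k).mpr hk]
  · have hne : ζ ^ k - 1 ≠ 0 := sub_ne_zero.mpr fun h => hk ((hζ.pow_eq_one_iff_dvd k).mp h)
    refine (mul_eq_zero.mp ?_).resolve_right hne
    rw [geom_sum_mul, ← pow_mul, mul_comm, pow_mul, hζ.pow_eq_one, one_pow, sub_self]

lemma IsPrimitiveRoot.norm_pow_mul {ζ : ℂ} {n : ℕ} (hζ : IsPrimitiveRoot ζ n) (hn : n ≠ 0)
    (j : ℕ) (z : ℂ) : ‖ζ ^ j * z‖ = ‖z‖ := by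
  rw [norm_mul, norm_pow, hζ.norm'_eq_one hn, one_pow, one_mul]

lemma tsum_mul_pow_le {c : ℕ → ℝ} {B r : ℝ} (hc : Summable fun k => c k * r ^ k)
    (hB : ∀ k, k ≠ 0 → c k ≤ B) (hr0 : 0 ≤ r) (hr1 : r < 1) :
    ∑' k, c k * r ^ k ≤ c 0 + B * r / (1 - r) := by
  rw [hc.tsum_eq_zero_add, pow_zero, mul_one, div_eq_mul_inv]
  gcongr
  refine hasSum_le (fun k => ?_) ((summable_nat_add_iff 1).mpr hc).hasSum
    ((hasSum_geometric_of_lt_one hr0 hr1).mul_left (B * r))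
  calc c (k + 1) * r ^ (k + 1) ≤ B * r ^ (k + 1) := by gcongr; exact hB _ k.succ_ne_zero
    _ = B * r * r ^ k := by ring

section UnitDisk

variable {f : ℂ → ℂ} {a : ℕ → ℂ}

lemma one_le_radius_ofScalars (ha : ∀ z : ℂ, ‖z‖ < 1 → Summable fun k => a k * z ^ k) :
    1 ≤ (ofScalars ℂ a).radius := by
  refine ENNReal.le_of_forall_nnreal_lt fun t ht =>
    (ofScalars ℂ a).le_radius_of_tendsto (l := 0) ?_
  have ht1 : ‖(t : ℂ)‖ < 1 := by simpa using ht
  simpa [ofScalars_norm] using (ha t ht1).tendsto_atTop_zero.norm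

lemma summable_norm_mul_pow_of_summable (ha : ∀ z : ℂ, ‖z‖ < 1 → Summable fun k => a k * z ^ k)
    {r : ℝ} (hr0 : 0 ≤ r) (hr1 : r < 1) : Summable fun k => ‖a k‖ * r ^ k := by
  lift r to NNReal using hr0
  have hr : (r : ENNReal) < (ofScalars ℂ a).radius :=
    lt_of_lt_of_le (by exact_mod_cast hr1) (one_le_radius_ofScalars ha)
  simpa [ofScalars_norm] using (ofScalars ℂ a).summable_norm_mul_pow hr

lemma hasFPowerSeriesOnBall_ofScalars
    (hf : ∀ z : ℂ, ‖z‖ < 1 → HasSum (fun k => a k * z ^ k) (f z)) :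
    HasFPowerSeriesOnBall f (ofScalars ℂ a) 0 1 where
  r_le := one_le_radius_ofScalars fun z hz => (hf z hz).summable
  r_pos := one_pos
  hasSum {z} hz := by
    rw [mem_eball_zero_iff, ← ofReal_norm, ENNReal.ofReal_lt_one] at hz
    simpa [ofScalars_apply_eq, mul_comm] using hf z hz

lemma norm_coeff_one_le_one_sub_norm_sq
    (hf : ∀ z : ℂ, ‖z‖ < 1 → HasSum (fun k => a k * z ^ k) (f z))
    (hb : ∀ z : ℂ, ‖z‖ < 1 → ‖f z‖ ≤ 1) : ‖a 1‖ ≤ 1 - ‖a 0‖ ^ 2 := by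
  have hps := hasFPowerSeriesOnBall_ofScalars hf
  have hf0 : f 0 = a 0 := by simpa using (hps.coeff_zero fun _ => 0).symm
  have hf1 : deriv f 0 = a 1 := by simpa using hps.hasFPowerSeriesAt.deriv
  have hd : DifferentiableOn ℂ f (ball 0 1) := by
    simpa [← ENNReal.coe_one, Metric.eball_coe] using hps.differentiableOn
  have := norm_deriv_zero_le_one_sub_norm_sq hd fun z hz => by simpa using hb z (by simpa using hz)
  rwa [hf0, hf1] at this

lemma hasSum_mul_pow_average_rotations (hf : ∀ z : ℂ, ‖z‖ < 1 → HasSum (fun k => a k * z ^ k) (f z))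
    {ζ : ℂ} {n : ℕ} (hζ : IsPrimitiveRoot ζ n) (hn : n ≠ 0) {z : ℂ} (hz : ‖z‖ < 1) :
    HasSum (fun m => a (n * m) * (z ^ n) ^ m) ((n : ℂ)⁻¹ * ∑ j ∈ range n, f (ζ ^ j * z)) := by
  have havg := (hasSum_sum (s := range n) fun j _ =>
    hf _ ((hζ.norm_pow_mul hn j z).trans_lt hz)).mul_left (n : ℂ)⁻¹
  have hterm : ∀ k, (n : ℂ)⁻¹ * ∑ j ∈ range n, a k * (ζ ^ j * z) ^ k =
      if n ∣ k then a k * z ^ k else 0 := fun k => by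
    simp_rw [mul_pow, ← mul_sum, ← sum_mul, hζ.sum_pow_pow]
    split_ifs
    · field_simp
    · simp
  simp_rw [hterm] at havg
  rw [← (mul_right_injective₀ hn).hasSum_iff] at havg
  · simpa [Function.comp_def, ← pow_mul] using havg
  · rintro k hk
    rw [if_neg fun ⟨m, hm⟩ => hk ⟨m, hm.symm⟩]

lemma norm_coeff_le_one_sub_norm_sq
    (hf : ∀ z : ℂ, ‖z‖ < 1 → HasSum (fun k => a k * z ^ k) (f z))
    (hb : ∀ z : ℂ, ‖z‖ < 1 → ‖f z‖ ≤ 1) {n : ℕ} (hn : n ≠ 0) : ‖a n‖ ≤ 1 - ‖a 0‖ ^ 2 := by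
  obtain ⟨ζ, hζ⟩ : ∃ ζ : ℂ, IsPrimitiveRoot ζ n := ⟨_, Complex.isPrimitiveRoot_exp n hn⟩
  have hG : ∀ w : ℂ, ‖w‖ < 1 → HasSum (fun m => a (n * m) * w ^ m) (∑' m, a (n * m) * w ^ m) ∧
      ‖∑' m, a (n * m) * w ^ m‖ ≤ 1 := by
    intro w hw
    obtain ⟨z, rfl⟩ := IsAlgClosed.exists_pow_nat_eq w (Nat.pos_of_ne_zero hn)
    have hz : ‖z‖ < 1 := by rwa [norm_pow, pow_lt_one_iff_of_nonneg (norm_nonneg _) hn] at hw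
    have hsum := hasSum_mul_pow_average_rotations hf hζ hn hz
    refine ⟨hsum.tsum_eq ▸ hsum, ?_⟩
    calc ‖∑' m, a (n * m) * (z ^ n) ^ m‖
        = (n : ℝ)⁻¹ * ‖∑ j ∈ range n, f (ζ ^ j * z)‖ := by
          rw [hsum.tsum_eq, norm_mul, norm_inv, Complex.norm_natCast]
      _ ≤ (n : ℝ)⁻¹ * ∑ _j ∈ range n, (1 : ℝ) := by
          gcongr
          exact (norm_sum_le _ _).trans
            (sum_le_sum fun j _ => hb _ ((hζ.norm_pow_mul hn j z).trans_lt hz))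
      _ = 1 := by simp [hn]
  simpa using norm_coeff_one_le_one_sub_norm_sq (fun w hw => (hG w hw).1) fun w hw => (hG w hw).2

end UnitDisk

/-- Classical Bohr inequality. -/
theorem bohr_inequality (f : ℂ → ℂ) (a : ℕ → ℂ)
    (hf : ∀ z : ℂ, ‖z‖ < 1 → HasSum (fun k : ℕ => a k * z ^ k) (f z))
    (hb : ∀ z : ℂ, ‖z‖ < 1 → ‖f z‖ ≤ 1)
    (r : ℝ) (hr0 : 0 ≤ r) (hr : r ≤ 1 / 3) :
    ∑' k : ℕ, ‖a k‖ * r ^ k ≤ 1 := by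
  have hr1 : r < 1 := by linarith
  have hwiener : ∀ k, k ≠ 0 → ‖a k‖ ≤ 1 - ‖a 0‖ ^ 2 := fun k hk =>
    norm_coeff_le_one_sub_norm_sq hf hb hk
  have ha0 : ‖a 0‖ ≤ 1 := by nlinarith [hwiener 1 one_ne_zero, norm_nonneg (a 1)]
  have hgeom : r / (1 - r) ≤ 1 / 2 := by rw [div_le_iff₀ (by linarith)]; linarith
  have hsum := summable_norm_mul_pow_of_summable (fun z hz => (hf z hz).summable) hr0 hr1
  calc ∑' k, ‖a k‖ * r ^ k ≤ ‖a 0‖ + (1 - ‖a 0‖ ^ 2) * r / (1 - r) :=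
        tsum_mul_pow_le hsum hwiener hr0 hr1
    _ ≤ ‖a 0‖ + (1 - ‖a 0‖ ^ 2) * (1 / 2) := by
        rw [mul_div_assoc]; gcongr; nlinarith [norm_nonneg (a 0)]
    _ ≤ 1 := by nlinarith [sq_nonneg (1 - ‖a 0‖)]
end

section
/- The constant 1/3 in Bohr's inequality is best possible: for every r > 1/3 there exists a holomorphic function f on the unit disk with |f| ≤ 1 whose Taylor coefficients a_k satisfy Σ_{k=0}^∞ |a_k| r^k > 1. -/
/-!
The Möbius map `(a - z) / (1 - a z)`, `0 ≤ a < 1`, maps the unit disc into itself and has Taylor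
coefficients `a` and `-(1 - a²) aᵏ⁻¹`, so its Bohr sum at radius `r` is
`a + (1 - a²) r / (1 - a r)`. This exceeds `1` exactly when `r (1 + 2a) > 1`, which for `r > 1/3`
holds once `a` is close enough to `1`, e.g. for `a = 2 / (1 + 3r)`; that choice also keeps
`a r < 1`, which the series needs when `r ≥ 1`.
-/

section MobiusCoeff

variable {𝕜 : Type*} [NormedField 𝕜]

/-- The Taylor coefficients of `z ↦ (a - z) / (1 - a z)` at `0`. -/
def mobiusCoeff (a : 𝕜) : ℕ → 𝕜
  | 0 => a
  | n + 1 => -(1 - a ^ 2) * a ^ n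

theorem hasSum_mobiusCoeff_mul_pow {a z : 𝕜} (h : ‖a * z‖ < 1) :
    HasSum (fun k ↦ mobiusCoeff a k * z ^ k) ((a - z) / (1 - a * z)) := by
  have hden : 1 - a * z ≠ 0 := by
    rw [sub_ne_zero]
    rintro h1
    simp [← h1] at h
  have htail : HasSum (fun n ↦ mobiusCoeff a (n + 1) * z ^ (n + 1))
      (-(1 - a ^ 2) * z * (1 - a * z)⁻¹) := by
    have e : (fun n ↦ mobiusCoeff a (n + 1) * z ^ (n + 1)) =
        fun n ↦ -(1 - a ^ 2) * z * (a * z) ^ n := by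
      ext n
      rw [mobiusCoeff, mul_pow, pow_succ]
      ring
    rw [e]
    exact (hasSum_geometric_of_norm_lt_one h).mul_left _
  convert HasSum.zero_add (f := fun k ↦ mobiusCoeff a k * z ^ k) htail using 1
  rw [mobiusCoeff, pow_zero, mul_one]
  field_simp
  ring

theorem hasSum_norm_mobiusCoeff_mul_pow {a : 𝕜} {r : ℝ} (hr : 0 ≤ r) (h : ‖a‖ * r < 1) :
    HasSum (fun k ↦ ‖mobiusCoeff a k‖ * r ^ k) (‖a‖ + ‖1 - a ^ 2‖ * r / (1 - ‖a‖ * r)) := by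
  have htail : HasSum (fun n ↦ ‖mobiusCoeff a (n + 1)‖ * r ^ (n + 1))
      (‖1 - a ^ 2‖ * r * (1 - ‖a‖ * r)⁻¹) := by
    have e : (fun n ↦ ‖mobiusCoeff a (n + 1)‖ * r ^ (n + 1)) =
        fun n ↦ ‖1 - a ^ 2‖ * r * (‖a‖ * r) ^ n := by
      ext n
      rw [mobiusCoeff, norm_mul, norm_neg, norm_pow, mul_pow, pow_succ]
      ring
    rw [e]
    exact (hasSum_geometric_of_lt_one (by positivity) h).mul_left _
  convert HasSum.zero_add (f := fun k ↦ ‖mobiusCoeff a k‖ * r ^ k) htail using 1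
  rw [mobiusCoeff, div_eq_mul_inv, pow_zero, mul_one]

end MobiusCoeff

theorem normSq_one_sub_mul_sub_normSq_sub (a : ℝ) (z : ℂ) :
    ‖1 - (a : ℂ) * z‖ ^ 2 - ‖(a : ℂ) - z‖ ^ 2 = (1 - a ^ 2) * (1 - ‖z‖ ^ 2) := by
  simp only [← Complex.normSq_eq_norm_sq, Complex.normSq_apply, Complex.sub_re, Complex.sub_im,
    Complex.mul_re, Complex.mul_im, Complex.ofReal_re, Complex.ofReal_im, Complex.one_re,
    Complex.one_im]
  ring

theorem norm_mobius_le_one_s1 {a : ℝ} {z : ℂ} (ha : |a| ≤ 1) (hz : ‖z‖ ≤ 1) :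
    ‖((a : ℂ) - z) / (1 - a * z)‖ ≤ 1 := by
  rw [norm_div]
  have ha2 : 0 ≤ 1 - a ^ 2 := by nlinarith [sq_abs a, abs_nonneg a]
  have hz2 : 0 ≤ 1 - ‖z‖ ^ 2 := by nlinarith [norm_nonneg z]
  have hsq : ‖(a : ℂ) - z‖ ^ 2 ≤ ‖1 - (a : ℂ) * z‖ ^ 2 := by
    nlinarith [normSq_one_sub_mul_sub_normSq_sub a z, mul_nonneg ha2 hz2]
  exact div_le_one_of_le₀
    ((pow_le_pow_iff_left₀ (norm_nonneg _) (norm_nonneg _) two_ne_zero).mp hsq) (norm_nonneg _)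

theorem one_lt_add_mul_div_of_one_lt_mul {a r : ℝ} (ha : a < 1) (har : a * r < 1)
    (h : 1 < r * (1 + 2 * a)) : 1 < a + (1 - a ^ 2) * r / (1 - a * r) := by
  have htail : 1 - a < (1 - a ^ 2) * r / (1 - a * r) := by
    rw [lt_div_iff₀ (by linarith)]
    linarith [mul_pos (sub_pos.mpr ha) (sub_pos.mpr h)]
  linarith

theorem exists_mobius_parameter {r : ℝ} (hr : 1 / 3 < r) :
    ∃ a : ℝ, 0 ≤ a ∧ a < 1 ∧ a * r < 1 ∧ 1 < a + (1 - a ^ 2) * r / (1 - a * r) := by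
  have h3r : 0 < 1 + 3 * r := by linarith
  have ha : 2 / (1 + 3 * r) < 1 := by rw [div_lt_one h3r]; linarith
  have har : 2 / (1 + 3 * r) * r < 1 := by rw [div_mul_eq_mul_div, div_lt_one h3r]; linarith
  refine ⟨2 / (1 + 3 * r), by positivity, ha, har, one_lt_add_mul_div_of_one_lt_mul ha har ?_⟩
  have hfactor : r * (1 + 2 * (2 / (1 + 3 * r))) - 1 = (3 * r - 1) * (r + 1) / (1 + 3 * r) := by
    field_simp
    ring
  have hpos : 0 < (3 * r - 1) * (r + 1) / (1 + 3 * r) := by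
    apply div_pos (mul_pos _ _) h3r <;> linarith
  linarith

/-- Sharpness of the Bohr radius 1/3. -/
theorem bohr_radius_sharp (r : ℝ) (hr : 1 / 3 < r) :
    ∃ (f : ℂ → ℂ) (a : ℕ → ℂ),
      (∀ z : ℂ, ‖z‖ < 1 → HasSum (fun k : ℕ => a k * z ^ k) (f z)) ∧
      (∀ z : ℂ, ‖z‖ < 1 → ‖f z‖ ≤ 1) ∧
      Summable (fun k : ℕ => ‖a k‖ * r ^ k) ∧
      1 < ∑' k : ℕ, ‖a k‖ * r ^ k := by
  obtain ⟨a, ha0, ha1, har, hbohr⟩ := exists_mobius_parameter hr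
  have hnorm_a : ‖(a : ℂ)‖ = a := by simp [abs_of_nonneg ha0]
  have hnorm_coeff : ‖1 - (a : ℂ) ^ 2‖ = 1 - a ^ 2 := by
    rw [← Complex.ofReal_pow, ← Complex.ofReal_one, ← Complex.ofReal_sub, Complex.norm_real,
      Real.norm_of_nonneg (by nlinarith)]
  have hsum := hasSum_norm_mobiusCoeff_mul_pow (a := (a : ℂ)) (by linarith) (hnorm_a ▸ har)
  rw [hnorm_a, hnorm_coeff] at hsum
  refine ⟨fun z ↦ (a - z) / (1 - a * z), mobiusCoeff (a : ℂ), fun z hz ↦ ?_,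
    fun z hz ↦ norm_mobius_le_one_s1 (abs_le.mpr ⟨by linarith, ha1.le⟩) hz.le, hsum.summable,
    hsum.tsum_eq ▸ hbohr⟩
  refine hasSum_mobiusCoeff_mul_pow ?_
  rw [norm_mul, hnorm_a]
  nlinarith [norm_nonneg z]
end

section
/- If f(z) = Σ_{k=0}^∞ a_k z^k is holomorphic on the unit disk with |f| ≤ 1, then the coefficients satisfy Wiener's inequality: |a_k| ≤ 1 − |a_0|² for every k ≥ 1. -/
open Metric Set Finset ComplexConjugate
open scoped NNReal

/-!
Averaging `f` over the `k`-th roots of unity `ζ ^ j` gives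
`(1 / k) ∑ j, f (ζ ^ j * z) = ∑ m, a (k * m) * z ^ (k * m) = g (z ^ k)`, where `g` again maps the
unit disc into the closed unit disc and has coefficients `a 0, a k, a (2 * k), …`. So it suffices
to treat `k = 1`, which is the Schwarz–Pick estimate `‖g' 0‖ ≤ 1 - ‖g 0‖ ^ 2`: with `c = g 0`,
the disc automorphism `w ↦ (c - w) / (1 - conj c * w)` sends `c` to `0` and has derivative of
norm `1 / (1 - ‖c‖ ^ 2)` there, so Schwarz's lemma applied to its composite with `g` gives the
bound. When `‖c‖ = 1` the maximum principle makes `g` constant.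
-/

namespace Complex

theorem norm_sub_le_norm_one_sub_conj_mul {c w : ℂ} (hc : ‖c‖ ≤ 1) (hw : ‖w‖ ≤ 1) :
    ‖c - w‖ ≤ ‖1 - conj c * w‖ := by
  have key : ‖1 - conj c * w‖ ^ 2 - ‖c - w‖ ^ 2 = (1 - ‖c‖ ^ 2) * (1 - ‖w‖ ^ 2) := by
    simp only [Complex.sq_norm, normSq_apply, sub_re, sub_im, mul_re, mul_im, conj_re, conj_im,
      one_re, one_im]
    ring
  have hprod : 0 ≤ (1 - ‖c‖ ^ 2) * (1 - ‖w‖ ^ 2) := by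
    apply mul_nonneg <;> nlinarith [norm_nonneg c, norm_nonneg w]
  exact (pow_le_pow_iff_left₀ (norm_nonneg _) (norm_nonneg _) two_ne_zero).1 (by linarith)

theorem one_sub_conj_mul_ne_zero {c w : ℂ} (hc : ‖c‖ < 1) (hw : ‖w‖ ≤ 1) :
    1 - conj c * w ≠ 0 := by
  have hlt : ‖conj c * w‖ < 1 := by
    rw [norm_mul, RCLike.norm_conj]
    nlinarith [norm_nonneg c, norm_nonneg w]
  intro h
  rw [← sub_eq_zero.1 h, norm_one] at hlt
  exact lt_irrefl _ hlt

noncomputable def mobiusInvolution (c w : ℂ) : ℂ := (c - w) / (1 - conj c * w)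

@[simp]
theorem mobiusInvolution_self (c : ℂ) : mobiusInvolution c c = 0 := by
  simp [mobiusInvolution]

theorem norm_mobiusInvolution_le_one {c w : ℂ} (hc : ‖c‖ < 1) (hw : ‖w‖ ≤ 1) :
    ‖mobiusInvolution c w‖ ≤ 1 := by
  rw [mobiusInvolution, norm_div,
    div_le_one (norm_pos_iff.2 (one_sub_conj_mul_ne_zero hc hw))]
  exact norm_sub_le_norm_one_sub_conj_mul hc.le hw

theorem hasDerivAt_mobiusInvolution {c w : ℂ} (hw : 1 - conj c * w ≠ 0) :
    HasDerivAt (mobiusInvolution c) ((‖c‖ ^ 2 - 1) / (1 - conj c * w) ^ 2) w := by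
  refine (((hasDerivAt_id' w).const_sub c).div
    (((hasDerivAt_id' w).const_mul (conj c)).const_sub 1) hw).congr_deriv ?_
  rw [← conj_mul']
  ring

theorem norm_deriv_mobiusInvolution_self {c : ℂ} (hc : ‖c‖ < 1) :
    ‖deriv (mobiusInvolution c) c‖ = (1 - ‖c‖ ^ 2)⁻¹ := by
  have hpos : 0 < 1 - ‖c‖ ^ 2 := by nlinarith [norm_nonneg c]
  rw [(hasDerivAt_mobiusInvolution (one_sub_conj_mul_ne_zero hc hc.le)).deriv, conj_mul']
  norm_cast
  rw [norm_div, norm_pow, Real.norm_eq_abs, Real.norm_eq_abs, abs_of_pos hpos,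
    abs_sub_comm, abs_of_pos hpos]
  field_simp

variable {g : ℂ → ℂ}

theorem norm_deriv_zero_le_one_sub_norm_sq_of_norm_lt_one (hd : DifferentiableOn ℂ g (ball 0 1))
    (hg : MapsTo g (ball 0 1) (closedBall 0 1)) (h0 : ‖g 0‖ < 1) :
    ‖deriv g 0‖ ≤ 1 - ‖g 0‖ ^ 2 := by
  set φ := mobiusInvolution (g 0)
  have hφ : ∀ w ∈ closedBall (0 : ℂ) 1, DifferentiableAt ℂ φ w := fun w hw =>
    (hasDerivAt_mobiusInvolution
      (one_sub_conj_mul_ne_zero h0 (mem_closedBall_zero_iff.1 hw))).differentiableAt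
  have hωd : DifferentiableOn ℂ (φ ∘ g) (ball 0 1) := fun z hz =>
    (hφ _ (hg hz)).comp_differentiableWithinAt z (hd z hz)
  have hωmaps : MapsTo (φ ∘ g) (ball 0 1) (closedBall ((φ ∘ g) 0) 1) := fun z hz => by
    simpa [φ] using norm_mobiusInvolution_le_one h0 (mem_closedBall_zero_iff.1 (hg hz))
  have schwarz : ‖deriv (φ ∘ g) 0‖ ≤ 1 := by
    simpa using norm_deriv_le_div_of_mapsTo_ball hωd hωmaps one_pos
  have hg0 : DifferentiableAt ℂ g 0 := hd.differentiableAt (ball_mem_nhds 0 one_pos)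
  have hpos : 0 < 1 - ‖g 0‖ ^ 2 := by nlinarith [norm_nonneg (g 0)]
  rw [deriv_comp 0 (hφ _ (hg (mem_ball_self one_pos))) hg0, norm_mul,
    norm_deriv_mobiusInvolution_self h0, inv_mul_le_iff₀ hpos, mul_one] at schwarz
  exact schwarz

theorem deriv_zero_eq_zero_of_norm_eq_one (hd : DifferentiableOn ℂ g (ball 0 1))
    (hg : MapsTo g (ball 0 1) (closedBall 0 1)) (h0 : ‖g 0‖ = 1) : deriv g 0 = 0 := by
  have hmax : IsMaxOn (norm ∘ g) (ball 0 1) 0 := fun z hz => by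
    simpa [h0] using hg hz
  have hconst := eqOn_of_isPreconnected_of_isMaxOn_norm (convex_ball (0 : ℂ) 1).isPreconnected
    isOpen_ball hd (mem_ball_self one_pos) hmax
  rw [(Filter.eventuallyEq_of_mem (ball_mem_nhds 0 one_pos) hconst).deriv_eq]
  exact deriv_const _ _

theorem norm_deriv_zero_le_one_sub_norm_sq (hd : DifferentiableOn ℂ g (ball 0 1))
    (hg : MapsTo g (ball 0 1) (closedBall 0 1)) : ‖deriv g 0‖ ≤ 1 - ‖g 0‖ ^ 2 := by
  rcases (mem_closedBall_zero_iff.1 (hg (mem_ball_self one_pos))).lt_or_eq with h0 | h0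
  · exact norm_deriv_zero_le_one_sub_norm_sq_of_norm_lt_one hd hg h0
  · simp [deriv_zero_eq_zero_of_norm_eq_one hd hg h0, h0]

end Complex

theorem hasFPowerSeriesOnBall_ofScalars_of_hasSum {𝕜 : Type*} [RCLike 𝕜] {g : 𝕜 → 𝕜}
    {b : ℕ → 𝕜} {r : ℝ≥0} (hr : 0 < r)
    (h : ∀ z : 𝕜, ‖z‖ < r → HasSum (fun n => b n * z ^ n) (g z)) :
    HasFPowerSeriesOnBall g (FormalMultilinearSeries.ofScalars 𝕜 b) 0 r := by
  refine ⟨ENNReal.le_of_forall_nnreal_lt fun s hs => ?_, by exact_mod_cast hr, fun {y} hy => ?_⟩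
  · have hsr : ‖((s : ℝ) : 𝕜)‖ < r := by simpa using hs
    refine FormalMultilinearSeries.le_radius_of_summable_norm _ ?_
    simpa [FormalMultilinearSeries.ofScalars_norm] using (h _ hsr).summable.norm
  · rw [Metric.eball_coe, mem_ball_zero_iff] at hy
    simpa only [FormalMultilinearSeries.ofScalars_apply_eq, smul_eq_mul, zero_add] using h y hy

theorem norm_coeff_one_le_one_sub_norm_coeff_zero_sq {g : ℂ → ℂ} {b : ℕ → ℂ}
    (hg : ∀ z : ℂ, ‖z‖ < 1 → HasSum (fun n => b n * z ^ n) (g z))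
    (hbd : ∀ z : ℂ, ‖z‖ < 1 → ‖g z‖ ≤ 1) :
    ‖b 1‖ ≤ 1 - ‖b 0‖ ^ 2 := by
  have hps := hasFPowerSeriesOnBall_ofScalars_of_hasSum (r := 1) one_pos (by simpa using hg)
  have hg0 : g 0 = b 0 := by simpa using (hps.coeff_zero fun _ => 0).symm
  have hderiv : deriv g 0 = b 1 := by
    simp [hps.hasFPowerSeriesAt.deriv]
  have hd : DifferentiableOn ℂ g (ball 0 1) := by
    simpa only [Metric.eball_coe, NNReal.coe_one] using hps.differentiableOn
  have hmaps : MapsTo g (ball 0 1) (closedBall 0 1) := fun z hz => by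
    simpa using hbd z (by simpa using hz)
  simpa [hg0, hderiv] using Complex.norm_deriv_zero_le_one_sub_norm_sq hd hmaps

theorem IsPrimitiveRoot.geom_sum_pow_eq_ite {R : Type*} [CommRing R] [IsDomain R] {ζ : R}
    {k : ℕ} (hζ : IsPrimitiveRoot ζ k) (n : ℕ) :
    ∑ j ∈ range k, (ζ ^ n) ^ j = if k ∣ n then (k : R) else 0 := by
  split_ifs with hdvd
  · simp [(hζ.pow_eq_one_iff_dvd n).2 hdvd]
  · have hne : ζ ^ n - 1 ≠ 0 := sub_ne_zero.2 fun h => hdvd ((hζ.pow_eq_one_iff_dvd n).1 h)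
    have hroot : (ζ ^ n) ^ k = 1 := by rw [← pow_mul, mul_comm, pow_mul, hζ.pow_eq_one, one_pow]
    have := geom_sum_mul (ζ ^ n) k
    rw [hroot, sub_self] at this
    exact (mul_eq_zero.1 this).resolve_right hne

theorem IsPrimitiveRoot.hasSum_coeff_mul_pow_mul {K : Type*} [Field K] [CharZero K]
    [TopologicalSpace K] [IsTopologicalRing K] {ζ z : K} {k : ℕ} (hζ : IsPrimitiveRoot ζ k)
    (hk : k ≠ 0) {a s : ℕ → K} (h : ∀ j ∈ range k, HasSum (fun n => a n * (ζ ^ j * z) ^ n) (s j)) :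
    HasSum (fun m => a (k * m) * (z ^ k) ^ m) ((k : K)⁻¹ * ∑ j ∈ range k, s j) := by
  have hfilter : ∀ n, (k : K)⁻¹ * ∑ j ∈ range k, a n * (ζ ^ j * z) ^ n =
      if k ∣ n then a n * z ^ n else 0 := fun n => by
    have hk' : (k : K) ≠ 0 := Nat.cast_ne_zero.2 hk
    rw [show ∑ j ∈ range k, a n * (ζ ^ j * z) ^ n = a n * z ^ n * ∑ j ∈ range k, (ζ ^ n) ^ j by
      rw [mul_sum]; exact sum_congr rfl fun j _ => by ring, hζ.geom_sum_pow_eq_ite]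
    split_ifs
    · field_simp
    · simp
  have hsum := (hasSum_sum h).mul_left (k : K)⁻¹
  simp only [hfilter] at hsum
  have hinj : Function.Injective (k * ·) := mul_right_injective₀ hk
  rw [← hinj.hasSum_iff fun n hn => if_neg fun ⟨m, hm⟩ => hn ⟨m, hm.symm⟩] at hsum
  simpa [Function.comp_def, pow_mul] using hsum

theorem exists_hasSum_multisection_norm_le_one {f : ℂ → ℂ} {a : ℕ → ℂ}
    (hf : ∀ z : ℂ, ‖z‖ < 1 → HasSum (fun k : ℕ => a k * z ^ k) (f z))
    (hb : ∀ z : ℂ, ‖z‖ < 1 → ‖f z‖ ≤ 1) {k : ℕ} (hk : k ≠ 0) {w : ℂ} (hw : ‖w‖ < 1) :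
    ∃ s, HasSum (fun m => a (k * m) * w ^ m) s ∧ ‖s‖ ≤ 1 := by
  obtain ⟨z, rfl⟩ := IsAlgClosed.exists_pow_nat_eq w (Nat.pos_of_ne_zero hk)
  have hz : ‖z‖ < 1 := by
    rw [norm_pow] at hw
    exact (pow_lt_one_iff_of_nonneg (norm_nonneg z) hk).1 hw
  have hζ := Complex.isPrimitiveRoot_exp k hk
  have hrot : ∀ j : ℕ, ‖Complex.exp (2 * Real.pi * Complex.I / k) ^ j * z‖ < 1 := by
    simpa [hζ.norm'_eq_one hk] using hz
  refine ⟨_, hζ.hasSum_coeff_mul_pow_mul hk fun j _ => hf _ (hrot j), ?_⟩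
  have hk' : (0 : ℝ) < k := Nat.cast_pos.2 (Nat.pos_of_ne_zero hk)
  calc _ ≤ (k : ℝ)⁻¹ * ∑ j ∈ range k, (1 : ℝ) := by
        rw [norm_mul, norm_inv, Complex.norm_natCast]
        exact mul_le_mul_of_nonneg_left (norm_sum_le_of_le _ fun j _ => hb _ (hrot j))
          (inv_nonneg.2 hk'.le)
    _ = 1 := by simp [hk'.ne']

/-- Wiener's inequality for coefficients of self-maps of the disk. -/
theorem wiener_inequality (f : ℂ → ℂ) (a : ℕ → ℂ)
    (hf : ∀ z : ℂ, ‖z‖ < 1 → HasSum (fun k : ℕ => a k * z ^ k) (f z))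
    (hb : ∀ z : ℂ, ‖z‖ < 1 → ‖f z‖ ≤ 1)
    (k : ℕ) (hk : 1 ≤ k) :
    ‖a k‖ ≤ 1 - ‖a 0‖ ^ 2 := by
  choose! g hg hgb using fun w (hw : ‖w‖ < 1) =>
    exists_hasSum_multisection_norm_le_one hf hb (Nat.one_le_iff_ne_zero.1 hk) hw
  simpa using norm_coeff_one_le_one_sub_norm_coeff_zero_sq hg hgb
end

section
/- If f(z) = Σ_{k=0}^∞ a_k z^k is holomorphic on the unit disk with |f| ≤ 1, then for all 0 ≤ r < 1: Σ_{k=1}^∞ |a_k| r^k + (1/(1+|a_0|) + r/(1−r)) Σ_{k=1}^∞ |a_k|² r^{2k} ≤ (r/(1−r)) (1 − |a_0|²). -/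
/-!
Fix `ρ < 1` and put `wₖ = aₖ ρᵏ`. Since `|f(ρ·)| ≤ 1` on the unit circle, multiplying a
polynomial `q` by `f(ρ·)` does not increase the `ℓ²` norm of its coefficients (Parseval at the
`K`-th roots of unity for the truncations, then `K → ∞`). Take
`q(z) = 1 + ε zⁿ conj (∑ₖ μₖ wₖ / z̄ᵏ)` with `μₖ = 1` for `2k < n`, `μₖ = 1 / (1 + |a₀|)` for
`2k = n`, `μₖ = 0` otherwise, and `ε` the phase of `wₙ`. The `n`-th coefficient of `f(ρ·) q` then
has modulus `|wₙ| + ∑ μₖ |wₖ|²`, the lower ones still have modulus at least `μₖ |wₖ|` (for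
`2k = n` this is exactly what the value `1 / (1 + |a₀|)` allows), so comparing norms gives
`|wₙ| + ∑ μₖ |wₖ|² ≤ 1`, and `ρ → 1` gives the same for `aₖ`. Moving the `k = 0` term `|a₀|²`
to the right, multiplying the `n`-th inequality by `rⁿ` and summing over `n ≥ 1` proves the
theorem, because `∑ₙ μₖ⁽ⁿ⁾ rⁿ = (1 / (1 + |a₀|) + r / (1 - r)) r²ᵏ`.
-/

open Finset Filter Topology Asymptotics Complex ComplexConjugate

namespace IsPrimitiveRoot

variable {ζ : ℂ} {K : ℕ}

theorem sum_pow_pow_mul_conj_pow_pow (hζ : IsPrimitiveRoot ζ K) {i j : ℕ} (hi : i < K)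
    (hj : j < K) :
    ∑ t ∈ range K, (ζ ^ t) ^ i * conj ((ζ ^ t) ^ j) = if i = j then (K : ℂ) else 0 := by
  have hK : K ≠ 0 := by omega
  have hζ0 : ζ ≠ 0 := hζ.ne_zero hK
  have hconj : conj ζ = ζ⁻¹ := (inv_eq_conj (hζ.norm'_eq_one hK)).symm
  have hterm : ∀ t, (ζ ^ t) ^ i * conj ((ζ ^ t) ^ j) = (ζ ^ i / ζ ^ j) ^ t := by
    intro t
    rw [map_pow, map_pow, hconj, div_eq_mul_inv, mul_pow, ← pow_mul, ← pow_mul, inv_pow,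
      inv_pow, ← pow_mul, ← pow_mul, mul_comm i, mul_comm j]
  simp_rw [hterm]
  split_ifs with hij
  · simp [hij, div_self (pow_ne_zero j hζ0)]
  · have hx1 : ζ ^ i / ζ ^ j ≠ 1 := fun h =>
      hij (hζ.pow_inj hi hj ((div_eq_one_iff_eq (pow_ne_zero j hζ0)).mp h))
    rw [geom_sum_eq hx1, div_pow, ← pow_mul, ← pow_mul, mul_comm i, mul_comm j, pow_mul,
      pow_mul, hζ.pow_eq_one, one_pow, one_pow, div_one, sub_self, zero_div]

theorem sum_norm_sq_eval (hζ : IsPrimitiveRoot ζ K) {M : ℕ} (hMK : M ≤ K) (p : ℕ → ℂ) :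
    ∑ t ∈ range K, ‖∑ i ∈ range M, p i * (ζ ^ t) ^ i‖ ^ 2 = K * ∑ i ∈ range M, ‖p i‖ ^ 2 := by
  apply ofReal_injective
  push_cast
  simp_rw [← mul_conj', map_sum, map_mul, sum_mul_sum, mul_sum]
  rw [sum_comm]
  refine sum_congr rfl fun i hi => ?_
  rw [sum_comm]
  have hiK : i < K := (mem_range.mp hi).trans_le hMK
  calc ∑ j ∈ range M, ∑ t ∈ range K, p i * (ζ ^ t) ^ i * (conj (p j) * conj ((ζ ^ t) ^ j))
      = ∑ j ∈ range M, p i * conj (p j) * (if i = j then (K : ℂ) else 0) := by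
        refine sum_congr rfl fun j hj => ?_
        rw [← sum_pow_pow_mul_conj_pow_pow hζ hiK ((mem_range.mp hj).trans_le hMK), mul_sum]
        exact sum_congr rfl fun t _ => by ring
    _ = K * (p i * conj (p i)) := by
        simp only [mul_ite, mul_zero, sum_ite_eq, hi, if_true]
        ring

end IsPrimitiveRoot

theorem norm_sum_range_le_norm_tsum_add_tail {W : ℕ → ℂ} (hW : Summable fun i => ‖W i‖)
    {u : ℂ} (hu : ‖u‖ = 1) (K : ℕ) :
    ‖∑ i ∈ range K, W i * u ^ i‖ ≤ ‖∑' i, W i * u ^ i‖ + ∑' i, ‖W (i + K)‖ := by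
  have hnorm : ∀ i, ‖W i * u ^ i‖ = ‖W i‖ := fun i => by
    rw [norm_mul, norm_pow, hu, one_pow, mul_one]
  have hWu : Summable fun i => W i * u ^ i := .of_norm (by simpa only [hnorm] using hW)
  have htail : ‖∑' i, W (i + K) * u ^ (i + K)‖ ≤ ∑' i, ‖W (i + K)‖ := by
    have h := (summable_nat_add_iff K).mpr hW
    simp_rw [← hnorm (_ + K)] at h ⊢
    exact norm_tsum_le_tsum_norm h
  have hsplit := norm_sub_le (∑ i ∈ range K, W i * u ^ i + ∑' i, W (i + K) * u ^ (i + K))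
    (∑' i, W (i + K) * u ^ (i + K))
  rw [add_sub_cancel_right, hWu.sum_add_tsum_nat_add K] at hsplit
  linarith

theorem sum_range_norm_sq_le_of_norm_tsum_le {W v : ℕ → ℂ} {D : ℕ}
    (hW : Summable fun i => ‖W i‖)
    (hdom : ∀ u : ℂ, ‖u‖ = 1 → ‖∑' i, W i * u ^ i‖ ≤ ‖∑ j ∈ range D, v j * u ^ j‖) (N : ℕ) :
    ∑ i ∈ range N, ‖W i‖ ^ 2 ≤ ∑ j ∈ range D, ‖v j‖ ^ 2 := by
  set T : ℕ → ℝ := fun K => ∑' i, ‖W (i + K)‖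
  set B := ∑ j ∈ range D, ‖v j‖
  have hT0 : ∀ K, 0 ≤ T K := fun K => tsum_nonneg fun i => norm_nonneg _
  have hbound : ∀ K, max N D < K →
      ∑ i ∈ range N, ‖W i‖ ^ 2 ≤ ∑ j ∈ range D, ‖v j‖ ^ 2 + T K * (2 * B + T K) := by
    intro K hK
    have hζ := isPrimitiveRoot_exp K (by omega)
    set ζ := cexp (2 * Real.pi * I / K)
    have hpoint : ∀ t, ‖∑ i ∈ range K, W i * (ζ ^ t) ^ i‖ ^ 2
        ≤ ‖∑ j ∈ range D, v j * (ζ ^ t) ^ j‖ ^ 2 + T K * (2 * B + T K) := by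
      intro t
      have hu : ‖ζ ^ t‖ = 1 := by rw [norm_pow, hζ.norm'_eq_one (by omega), one_pow]
      have htrunc := norm_sum_range_le_norm_tsum_add_tail hW hu K
      have hq : ‖∑ j ∈ range D, v j * (ζ ^ t) ^ j‖ ≤ B :=
        (norm_sum_le _ _).trans_eq (sum_congr rfl fun j _ => by
          rw [norm_mul, norm_pow, hu, one_pow, mul_one])
      nlinarith [hdom _ hu, norm_nonneg (∑ i ∈ range K, W i * (ζ ^ t) ^ i),
        norm_nonneg (∑ j ∈ range D, v j * (ζ ^ t) ^ j), hT0 K]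
    have hsum := sum_le_sum fun t (_ : t ∈ range K) => hpoint t
    rw [sum_add_distrib, hζ.sum_norm_sq_eval le_rfl, hζ.sum_norm_sq_eval (by omega), sum_const,
      card_range, nsmul_eq_mul, ← mul_add] at hsum
    have hKpos : (0 : ℝ) < K := by exact_mod_cast (show 0 < K by omega)
    calc ∑ i ∈ range N, ‖W i‖ ^ 2 ≤ ∑ i ∈ range K, ‖W i‖ ^ 2 :=
          sum_le_sum_of_subset_of_nonneg (range_subset_range.mpr (by omega))
            fun _ _ _ => sq_nonneg _
      _ ≤ _ := le_of_mul_le_mul_left hsum hKpos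
  have hlim : Tendsto (fun K => ∑ j ∈ range D, ‖v j‖ ^ 2 + T K * (2 * B + T K)) atTop
      (𝓝 (∑ j ∈ range D, ‖v j‖ ^ 2)) := by
    have hT : Tendsto T atTop (𝓝 0) := tendsto_sum_nat_add fun i => ‖W i‖
    simpa using tendsto_const_nhds.add (hT.mul (tendsto_const_nhds.add hT))
  exact ge_of_tendsto hlim ((eventually_gt_atTop (max N D)).mono hbound)

def cauchyProduct (w v : ℕ → ℂ) (i : ℕ) : ℂ :=
  ∑ kl ∈ antidiagonal i, w kl.1 * v kl.2

theorem cauchyProduct_eq_sum_range (w v : ℕ → ℂ) (i : ℕ) :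
    cauchyProduct w v i = ∑ k ∈ range (i + 1), w k * v (i - k) :=
  Nat.sum_antidiagonal_eq_sum_range_succ_mk _ i

theorem cauchyProduct_mul_pow (w v : ℕ → ℂ) (u : ℂ) (i : ℕ) :
    cauchyProduct w v i * u ^ i
      = cauchyProduct (fun k => w k * u ^ k) (fun j => v j * u ^ j) i := by
  rw [cauchyProduct, cauchyProduct, sum_mul]
  refine sum_congr rfl fun kl hkl => ?_
  rw [← mem_antidiagonal.mp hkl, pow_add]
  ring

section PowerSeries

variable {f : ℂ → ℂ} {a : ℕ → ℂ} {ρ : ℝ}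

theorem summable_norm_mul_pow_of_hasSum (hf : ∀ z : ℂ, ‖z‖ < 1 → HasSum (fun k => a k * z ^ k) (f z))
    (hρ0 : 0 ≤ ρ) (hρ1 : ρ < 1) : Summable fun k => ‖a k‖ * ρ ^ k := by
  obtain ⟨σ, hρσ, hσ1⟩ := exists_between hρ1
  have hσ0 : 0 < σ := hρ0.trans_lt hρσ
  have hσ : ‖(σ : ℂ)‖ < 1 := by rwa [norm_real, Real.norm_of_nonneg hσ0.le]
  have hbdd : (fun k => ‖a k‖ * σ ^ k) =O[atTop] fun _ => (1 : ℝ) := by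
    refine Tendsto.isBigO_one ℝ (c := 0) ?_
    simpa [norm_mul, norm_pow, norm_real, Real.norm_of_nonneg hσ0.le] using
      (hf _ hσ).summable.tendsto_atTop_zero.norm
  refine summable_of_isBigO_nat (summable_geometric_of_lt_one (by positivity)
    ((div_lt_one hσ0).mpr hρσ)) ?_
  refine ((hbdd.mul (isBigO_refl (fun k => (ρ / σ) ^ k) atTop)).congr_left fun k => ?_).trans ?_
  · rw [div_pow]
    field_simp
  · simp only [one_mul]
    exact isBigO_refl _ _

theorem sum_range_norm_sq_cauchyProduct_le
    (hf : ∀ z : ℂ, ‖z‖ < 1 → HasSum (fun k => a k * z ^ k) (f z))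
    (hb : ∀ z : ℂ, ‖z‖ < 1 → ‖f z‖ ≤ 1) (hρ0 : 0 ≤ ρ) (hρ1 : ρ < 1) {v : ℕ → ℂ} {D : ℕ}
    (hv : ∀ j, D ≤ j → v j = 0) (N : ℕ) :
    ∑ i ∈ range N, ‖cauchyProduct (fun k => a k * (ρ : ℂ) ^ k) v i‖ ^ 2
      ≤ ∑ j ∈ range D, ‖v j‖ ^ 2 := by
  set w : ℕ → ℂ := fun k => a k * (ρ : ℂ) ^ k
  have hw : Summable fun k => ‖w k‖ := by
    simpa [w, norm_mul, norm_pow, norm_real, Real.norm_of_nonneg hρ0] using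
      summable_norm_mul_pow_of_hasSum hf hρ0 hρ1
  have hvu_zero : ∀ u : ℂ, ∀ j ∉ range D, v j * u ^ j = 0 := fun u j hj => by
    rw [hv j (by simpa using hj), zero_mul]
  refine sum_range_norm_sq_le_of_norm_tsum_le (W := cauchyProduct w v)
    (summable_norm_sum_mul_antidiagonal_of_summable_norm hw
      (summable_of_ne_finset_zero (s := range D) fun j hj => by simp [hv j (by simpa using hj)]))
    (fun u hu => ?_) N
  have hnorm : ∀ (g : ℕ → ℂ) k, ‖g k * u ^ k‖ = ‖g k‖ := fun g k => by
    rw [norm_mul, norm_pow, hu, one_pow, mul_one]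
  have hρu : ‖(ρ : ℂ) * u‖ < 1 := by rwa [norm_mul, hu, mul_one, norm_real, Real.norm_of_nonneg hρ0]
  have hfu : ∑' k, w k * u ^ k = f (ρ * u) := by
    refine HasSum.tsum_eq ?_
    simpa only [w, mul_pow, mul_assoc] using hf _ hρu
  have hprod : ∑' i, cauchyProduct w v i * u ^ i = f (ρ * u) * ∑ j ∈ range D, v j * u ^ j := by
    have hvu : HasSum (fun j => v j * u ^ j) (∑ j ∈ range D, v j * u ^ j) :=
      hasSum_sum_of_ne_finset_zero (hvu_zero u)
    rw [tsum_congr (cauchyProduct_mul_pow w v u), ← hfu, ← hvu.tsum_eq]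
    exact (tsum_mul_tsum_eq_tsum_sum_antidiagonal_of_summable_norm (f := fun k => w k * u ^ k)
      (by simpa only [hnorm] using hw) hvu.summable.norm).symm
  rw [hprod, norm_mul]
  exact mul_le_of_le_one_left (norm_nonneg _) (hb _ hρu)

end PowerSeries

def bohrWeight (e : ℝ) (n k : ℕ) : ℝ :=
  if 2 * k < n then 1 else if 2 * k = n then e else 0

theorem bohrWeight_nonneg {e : ℝ} (he : 0 ≤ e) (n k : ℕ) : 0 ≤ bohrWeight e n k := by
  unfold bohrWeight
  split_ifs <;> first | exact zero_le_one | exact he | exact le_rfl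

theorem bohrWeight_zero {e : ℝ} {n : ℕ} (hn : 1 ≤ n) : bohrWeight e n 0 = 1 :=
  if_pos (by omega)

theorem bohrWeight_self {e : ℝ} {n : ℕ} (hn : 1 ≤ n) : bohrWeight e n n = 0 := by
  rw [bohrWeight, if_neg (by omega), if_neg (by omega)]

def bohrTestVector (w : ℕ → ℂ) (μ : ℕ → ℝ) (ε : ℂ) (n j : ℕ) : ℂ :=
  (if j = 0 then 1 else 0) + if j ≤ n then ε * μ (n - j) * conj (w (n - j)) else 0

section TestVector

variable (w : ℕ → ℂ) (μ : ℕ → ℝ) (ε : ℂ) {n : ℕ}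

theorem bohrTestVector_eq_zero (j : ℕ) (hj : n + 1 ≤ j) : bohrTestVector w μ ε n j = 0 := by
  rw [bohrTestVector, if_neg (by omega), if_neg (by omega), add_zero]

theorem cauchyProduct_bohrTestVector {i : ℕ} (hi : i ≤ n) :
    cauchyProduct w (bohrTestVector w μ ε n) i
      = w i + ε * ∑ k ∈ range (i + 1), w k * μ (n - i + k) * conj (w (n - i + k)) := by
  simp only [cauchyProduct_eq_sum_range, bohrTestVector, mul_add, sum_add_distrib, mul_sum]
  congr 1
  · rw [sum_eq_single_of_mem i (self_mem_range_succ i) fun k hk hki => by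
      rw [if_neg (by simp only [mem_range] at hk; omega), mul_zero]]
    simp
  · refine sum_congr rfl fun k hk => ?_
    rw [if_pos (by omega), show n - (i - k) = n - i + k by simp only [mem_range] at hk; omega]
    ring

theorem cauchyProduct_bohrTestVector_self :
    cauchyProduct w (bohrTestVector w μ ε n) n
      = w n + ε * ((∑ k ∈ range (n + 1), μ k * ‖w k‖ ^ 2 : ℝ) : ℂ) := by
  rw [cauchyProduct_bohrTestVector w μ ε le_rfl]
  push_cast
  simp only [Nat.sub_self, zero_add, ← mul_conj', mul_assoc, mul_left_comm (w _)]

theorem sum_norm_sq_bohrTestVector (hε : ‖ε‖ = 1) (hμ : μ n = 0) :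
    ∑ j ∈ range (n + 1), ‖bohrTestVector w μ ε n j‖ ^ 2
      = 1 + ∑ k ∈ range (n + 1), μ k ^ 2 * ‖w k‖ ^ 2 := by
  have hj : ∀ j ∈ range (n + 1), ‖bohrTestVector w μ ε n j‖ ^ 2
      = (if j = 0 then 1 else 0) + μ (n - j) ^ 2 * ‖w (n - j)‖ ^ 2 := by
    intro j hj
    rw [bohrTestVector, if_pos (show j ≤ n by simp only [mem_range] at hj; omega)]
    split_ifs with hj0
    · simp [hj0, hμ]
    · simp [hε, mul_pow]
  rw [sum_congr rfl hj, sum_add_distrib, sum_ite_eq', if_pos (by simp)]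
  congr 1
  exact sum_range_reflect (fun k => μ k ^ 2 * ‖w k‖ ^ 2) (n + 1)

end TestVector

theorem bohrWeight_mul_norm_le_norm_cauchyProduct (w : ℕ → ℂ) {ε : ℂ} (hε : ‖ε‖ = 1)
    {e : ℝ} (he : 0 ≤ e) (he0 : e * (1 + ‖w 0‖) = 1) {n i : ℕ} (hi : i < n) :
    bohrWeight e n i * ‖w i‖
      ≤ ‖cauchyProduct w (bohrTestVector w (bohrWeight e n) ε n) i‖ := by
  rw [cauchyProduct_bohrTestVector _ _ _ hi.le]
  have hfar : ∀ k, n < 2 * (n - i + k) → bohrWeight e n (n - i + k) = 0 := fun k hk => by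
    rw [bohrWeight, if_neg (by omega), if_neg (by omega)]
  rcases lt_trichotomy (2 * i) n with hlt | heq | hgt
  · rw [sum_eq_zero fun k _ => by rw [hfar k (by omega)]; push_cast; ring, mul_zero, add_zero,
      bohrWeight, if_pos hlt, one_mul]
  · rw [sum_eq_single_of_mem 0 (by simp) fun k _ hk => by
      rw [hfar k (by omega)]; push_cast; ring]
    rw [show n - i + 0 = i by omega, bohrWeight, if_neg (by omega), if_pos heq]
    calc e * ‖w i‖ = ‖w i‖ - ‖ε * (w 0 * e * conj (w i))‖ := by
          rw [norm_mul, norm_mul, norm_mul, hε, RCLike.norm_conj, norm_real,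
            Real.norm_of_nonneg he]
          linear_combination ‖w i‖ * he0
      _ ≤ _ := norm_sub_le_norm_add _ _
  · rw [bohrWeight, if_neg (by omega), if_neg (by omega), zero_mul]
    exact norm_nonneg _

section CoefficientInequality

variable {f : ℂ → ℂ} {a : ℕ → ℂ}

theorem norm_add_sum_bohrWeight_le_one_of_lt_one
    (hf : ∀ z : ℂ, ‖z‖ < 1 → HasSum (fun k => a k * z ^ k) (f z))
    (hb : ∀ z : ℂ, ‖z‖ < 1 → ‖f z‖ ≤ 1) {ρ : ℝ} (hρ0 : 0 ≤ ρ) (hρ1 : ρ < 1) {n : ℕ}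
    (hn : 1 ≤ n) :
    ‖a n * (ρ : ℂ) ^ n‖ + ∑ k ∈ range (n + 1),
      bohrWeight (1 / (1 + ‖a 0‖)) n k * ‖a k * (ρ : ℂ) ^ k‖ ^ 2 ≤ 1 := by
  set w : ℕ → ℂ := fun k => a k * (ρ : ℂ) ^ k
  set e := 1 / (1 + ‖a 0‖)
  set μ := bohrWeight e n
  set ε := cexp (arg (w n) * I)
  set S := ∑ k ∈ range (n + 1), μ k * ‖w k‖ ^ 2
  have he : 0 ≤ e := by positivity
  have hε : ‖ε‖ = 1 := norm_exp_ofReal_mul_I _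
  have hS : 0 ≤ S := sum_nonneg fun k _ => mul_nonneg (bohrWeight_nonneg he n k) (sq_nonneg _)
  have hμn : μ n = 0 := bohrWeight_self hn
  have hbessel := sum_range_norm_sq_cauchyProduct_le hf hb hρ0 hρ1
    (bohrTestVector_eq_zero w μ ε (n := n)) (n + 1)
  rw [sum_range_succ (fun i => ‖cauchyProduct w _ i‖ ^ 2), sum_norm_sq_bohrTestVector w μ ε hε hμn,
    sum_range_succ (fun k => μ k ^ 2 * ‖w k‖ ^ 2), hμn, cauchyProduct_bohrTestVector_self]
    at hbessel
  have hnorm_n : ‖w n + ε * (S : ℂ)‖ = ‖w n‖ + S := by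
    have hwn : (‖w n‖ : ℂ) * ε = w n := norm_mul_exp_arg_mul_I _
    rw [show w n + ε * (S : ℂ) = ((‖w n‖ + S : ℝ) : ℂ) * ε by
      rw [ofReal_add, add_mul, hwn, mul_comm], norm_mul, hε, mul_one, norm_real,
      Real.norm_of_nonneg (by positivity)]
  have hlow : ∑ i ∈ range n, μ i ^ 2 * ‖w i‖ ^ 2
      ≤ ∑ i ∈ range n, ‖cauchyProduct w (bohrTestVector w μ ε n) i‖ ^ 2 :=
    sum_le_sum fun i hi => by
      rw [← mul_pow]
      exact pow_le_pow_left₀ (mul_nonneg (bohrWeight_nonneg he n i) (norm_nonneg _))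
        (bohrWeight_mul_norm_le_norm_cauchyProduct w hε he (by simp [w, e]; field_simp)
          (mem_range.mp hi)) 2
  rw [hnorm_n] at hbessel
  have hsq : (‖w n‖ + S) ^ 2 ≤ 1 := by nlinarith
  exact (pow_le_one_iff_of_nonneg (by positivity) two_ne_zero).mp hsq

theorem norm_add_sum_bohrWeight_le_one
    (hf : ∀ z : ℂ, ‖z‖ < 1 → HasSum (fun k => a k * z ^ k) (f z))
    (hb : ∀ z : ℂ, ‖z‖ < 1 → ‖f z‖ ≤ 1) {n : ℕ} (hn : 1 ≤ n) :
    ‖a n‖ + ∑ k ∈ range (n + 1), bohrWeight (1 / (1 + ‖a 0‖)) n k * ‖a k‖ ^ 2 ≤ 1 := by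
  set F : ℝ → ℝ := fun ρ => ‖a n * (ρ : ℂ) ^ n‖ + ∑ k ∈ range (n + 1),
      bohrWeight (1 / (1 + ‖a 0‖)) n k * ‖a k * (ρ : ℂ) ^ k‖ ^ 2
  have hF : Set.Icc 0 1 ⊆ {ρ | F ρ ≤ 1} := by
    rw [← closure_Ico zero_ne_one]
    exact (isClosed_le (by fun_prop) continuous_const).closure_subset_iff.mpr
      fun ρ hρ => norm_add_sum_bohrWeight_le_one_of_lt_one hf hb hρ.1 hρ.2 hn
  simpa [F] using hF ⟨zero_le_one, le_rfl⟩

end CoefficientInequality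

section Summation

variable {e r : ℝ}

theorem hasSum_bohrWeight_mul_pow (e : ℝ) (hr0 : 0 ≤ r) (hr1 : r < 1) (k : ℕ) :
    HasSum (fun n => bohrWeight e n k * r ^ n) ((e + r / (1 - r)) * r ^ (2 * k)) := by
  rw [← hasSum_nat_add_iff' (2 * k), sum_eq_zero fun i hi => by
    rw [bohrWeight, if_neg (by simp only [mem_range] at hi; omega),
      if_neg (by simp only [mem_range] at hi; omega), zero_mul], sub_zero]
  have hshift : (fun m => bohrWeight e (m + 2 * k) k * r ^ (m + 2 * k))
      = fun m => r ^ (2 * k) * Function.update (fun m => r ^ m) 0 e m := by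
    ext (_ | m)
    · simp [bohrWeight, mul_comm]
    · rw [bohrWeight, if_pos (by omega), Function.update_of_ne (by omega), pow_add]
      ring
  have hsum : (e + r / (1 - r)) * r ^ (2 * k) = r ^ (2 * k) * (e - r ^ 0 + (1 - r)⁻¹) := by
    have : 1 - r ≠ 0 := by linarith
    field_simp
    ring
  rw [hshift, hsum]
  exact ((hasSum_geometric_of_lt_one hr0 hr1).update 0 e).mul_left _

theorem tsum_sum_bohrWeight_mul_pow {y : ℕ → ℝ} (hy : ∀ k, 0 ≤ y k) (he : 0 ≤ e)
    (hr0 : 0 ≤ r) (hr1 : r < 1)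
    (hsum : Summable fun n =>
      (∑ k ∈ range (n + 1), bohrWeight e (n + 1) (k + 1) * y k) * r ^ (n + 1)) :
    ∑' n, (∑ k ∈ range (n + 1), bohrWeight e (n + 1) (k + 1) * y k) * r ^ (n + 1)
      = (e + r / (1 - r)) * ∑' k, y k * r ^ (2 * (k + 1)) := by
  set G : ℕ → ℕ → ℝ := fun n k => y k * (bohrWeight e (n + 1) (k + 1) * r ^ (n + 1)) with hGdef
  have hG : ∀ n k, 0 ≤ G n k := fun n k => by
    have := bohrWeight_nonneg he (n + 1) (k + 1); have := hy k; positivity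
  have hrow : ∀ n, HasSum (G n)
      ((∑ k ∈ range (n + 1), bohrWeight e (n + 1) (k + 1) * y k) * r ^ (n + 1)) := fun n => by
    have hfin : HasSum (G n) (∑ k ∈ range (n + 1), G n k) :=
      hasSum_sum_of_ne_finset_zero fun k hk => by
        simp only [hGdef]
        rw [bohrWeight, if_neg (by simp only [mem_range] at hk; omega),
          if_neg (by simp only [mem_range] at hk; omega), zero_mul, mul_zero]
    rwa [sum_mul, ← sum_congr rfl fun k _ => show G n k = _ by simp only [hGdef]; ring]
  have hcol : ∀ k, HasSum (fun n => G n k) (y k * ((e + r / (1 - r)) * r ^ (2 * (k + 1)))) :=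
    fun k => by
      have h0 : bohrWeight e 0 (k + 1) = 0 := by simp [bohrWeight]
      simpa only [range_one, sum_singleton, h0, zero_mul, sub_zero] using
        ((hasSum_nat_add_iff' 1).mpr (hasSum_bohrWeight_mul_pow e hr0 hr1 (k + 1))).mul_left
          (y k)
  have hGsum : Summable (Function.uncurry G) :=
    (summable_prod_of_nonneg fun p => hG p.1 p.2).mpr
      ⟨fun n => (hrow n).summable, by simpa only [(hrow _).tsum_eq] using hsum⟩
  rw [← tsum_mul_left, tsum_congr fun k => mul_left_comm _ _ _,
    ← tsum_congr fun k => (hcol k).tsum_eq,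
    hGsum.tsum_comm' (fun n => (hrow n).summable) fun k => (hcol k).summable]
  exact tsum_congr fun n => (hrow n).tsum_eq.symm

theorem tsum_add_mul_tsum_le {c y : ℕ → ℝ} {A : ℝ} (hc : ∀ n, 0 ≤ c n) (hy : ∀ k, 0 ≤ y k)
    (he : 0 ≤ e) (hr0 : 0 ≤ r) (hr1 : r < 1)
    (h : ∀ n, c (n + 1) + ∑ k ∈ range (n + 1), bohrWeight e (n + 1) (k + 1) * y k ≤ A) :
    ∑' n, c (n + 1) * r ^ (n + 1) + (e + r / (1 - r)) * ∑' k, y k * r ^ (2 * (k + 1))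
      ≤ r / (1 - r) * A := by
  set P : ℕ → ℝ := fun n => ∑ k ∈ range (n + 1), bohrWeight e (n + 1) (k + 1) * y k
  have hP : ∀ n, 0 ≤ P n := fun n =>
    sum_nonneg fun k _ => mul_nonneg (bohrWeight_nonneg he _ _) (hy k)
  have hgeom : HasSum (fun n => r ^ (n + 1)) (r / (1 - r)) := by
    simpa only [pow_succ', div_eq_mul_inv] using (hasSum_geometric_of_lt_one hr0 hr1).mul_left r
  have hsummable {g : ℕ → ℝ} (hg0 : ∀ n, 0 ≤ g n) (hgA : ∀ n, g n ≤ A) :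
      Summable fun n => g n * r ^ (n + 1) :=
    hgeom.summable.mul_left A |>.of_nonneg_of_le (fun n => by have := hg0 n; positivity)
      fun n => mul_le_mul_of_nonneg_right (hgA n) (by positivity)
  have hPsum := hsummable hP fun n => by linarith [h n, hc (n + 1)]
  have hcsum := hsummable (fun n => hc (n + 1)) fun n => by linarith [h n, hP n]
  calc ∑' n, c (n + 1) * r ^ (n + 1) + (e + r / (1 - r)) * ∑' k, y k * r ^ (2 * (k + 1))
      = ∑' n, (c (n + 1) + P n) * r ^ (n + 1) := by
        rw [← tsum_sum_bohrWeight_mul_pow hy he hr0 hr1 hPsum, ← hcsum.tsum_add hPsum]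
        exact tsum_congr fun n => (add_mul _ _ _).symm
    _ ≤ ∑' n, A * r ^ (n + 1) :=
        (hcsum.add hPsum |>.congr fun n => (add_mul _ _ _).symm).tsum_le_tsum
          (fun n => mul_le_mul_of_nonneg_right (h n) (by positivity)) (hgeom.summable.mul_left A)
    _ = r / (1 - r) * A := by rw [tsum_mul_left, hgeom.tsum_eq, mul_comm]

end Summation

/-- Refined Bohr inequality (Theorem B). -/
theorem refined_bohr (f : ℂ → ℂ) (a : ℕ → ℂ)
    (hf : ∀ z : ℂ, ‖z‖ < 1 → HasSum (fun k : ℕ => a k * z ^ k) (f z))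
    (hb : ∀ z : ℂ, ‖z‖ < 1 → ‖f z‖ ≤ 1)
    (r : ℝ) (hr0 : 0 ≤ r) (hr1 : r < 1) :
    (∑' k : ℕ, ‖a (k + 1)‖ * r ^ (k + 1)) +
      (1 / (1 + ‖a 0‖) + r / (1 - r)) *
        ∑' k : ℕ, ‖a (k + 1)‖ ^ 2 * r ^ (2 * (k + 1)) ≤
      r / (1 - r) * (1 - ‖a 0‖ ^ 2) := by
  refine tsum_add_mul_tsum_le (c := fun n => ‖a n‖) (y := fun k => ‖a (k + 1)‖ ^ 2)
    (fun n => norm_nonneg _) (fun k => sq_nonneg _) (by positivity) hr0 hr1 fun n => ?_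
  have hcoeff := norm_add_sum_bohrWeight_le_one hf hb (n := n + 1) (by omega)
  rw [sum_range_succ', bohrWeight_zero (by omega), one_mul] at hcoeff
  linarith
end

section
/- For each p, m ∈ ℕ with 1 ≤ m ≤ p, the function G(r) = 5r^{2p+m} − 2r^{p+m} + r^m + 4r^p − 4 has a unique root in (0,1). -/
lemma deriv_pos_aux (p m : ℕ) (hm : 1 ≤ m) (hmp : m ≤ p) (r : ℝ) (h0 : 0 < r) (h1 : r < 1) :
    0 < 5 * (((2*p+m : ℕ) : ℝ) * r ^ (2*p+m-1)) - 2 * (((p+m : ℕ) : ℝ) * r ^ (p+m-1))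
      + (m : ℝ) * r ^ (m-1) + 4 * ((p : ℝ) * r ^ (p-1)) := by
  have hp : 1 ≤ p := le_trans hm hmp
  set X := r ^ p with hX
  set Y := r ^ m with hY
  have hX0 : 0 < X := pow_pos h0 p
  have hX1 : X < 1 := pow_lt_one₀ h0.le h1 (by omega)
  have hY0 : 0 < Y := pow_pos h0 m
  have hY1 : Y < 1 := pow_lt_one₀ h0.le h1 (by omega)
  have hr : ∀ n : ℕ, 1 ≤ n → r * r ^ (n-1) = r ^ n := by
    intro n hn
    rw [← pow_succ']
    congr 1
    omega
  have e1 : r * r ^ (2*p+m-1) = X^2 * Y := by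
    rw [hr _ (by omega), show 2*p+m = p*2+m by ring, pow_add, pow_mul]
  have e2 : r * r ^ (p+m-1) = X * Y := by
    rw [hr _ (by omega), pow_add]
  have e3 : r * r ^ (m-1) = Y := hr _ hm
  have e4 : r * r ^ (p-1) = X := hr _ hp
  have hmr : (1:ℝ) ≤ (m:ℝ) := by exact_mod_cast hm
  have hpr : (1:ℝ) ≤ (p:ℝ) := by exact_mod_cast hp
  have hc1 : (0:ℝ) < 5*X^2 - 2*X + 1 := by nlinarith [sq_nonneg (5*X-1)]
  have hc2 : (0:ℝ) < 5*X*Y - Y + 2 := by nlinarith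
  have hE : 0 < r * (5 * (((2*p+m : ℕ) : ℝ) * r ^ (2*p+m-1)) - 2 * (((p+m : ℕ) : ℝ) * r ^ (p+m-1))
      + (m : ℝ) * r ^ (m-1) + 4 * ((p : ℝ) * r ^ (p-1))) := by
    have expand : r * (5 * (((2*p+m : ℕ) : ℝ) * r ^ (2*p+m-1)) - 2 * (((p+m : ℕ) : ℝ) * r ^ (p+m-1))
        + (m : ℝ) * r ^ (m-1) + 4 * ((p : ℝ) * r ^ (p-1)))
        = ((m:ℝ)) * Y * (5*X^2 - 2*X + 1) + 2 * (p:ℝ) * X * (5*X*Y - Y + 2) := by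
      push_cast
      linear_combination (5*(2*(p:ℝ)+(m:ℝ))) * e1 - 2*((p:ℝ)+(m:ℝ)) * e2 + (m:ℝ) * e3 + 4*(p:ℝ) * e4
    rw [expand]
    have t1 : 0 < ((m:ℝ)) * Y * (5*X^2 - 2*X + 1) :=
      mul_pos (mul_pos (by linarith) hY0) hc1
    have t2 : 0 < 2 * (p:ℝ) * X * (5*X*Y - Y + 2) :=
      mul_pos (mul_pos (by linarith) hX0) hc2
    linarith
  nlinarith [hE, h0, mul_pos h0 h0]

/-- Existence and uniqueness of the radius `r̃_{p,m}` in `(0,1)`. -/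
theorem root_G_exists_unique (p m : ℕ) (hm : 1 ≤ m) (hmp : m ≤ p) :
    ∃! r : ℝ, r ∈ Set.Ioo (0 : ℝ) 1 ∧
      5 * r ^ (2 * p + m) - 2 * r ^ (p + m) + r ^ m + 4 * r ^ p - 4 = 0 := by
  have hp : 1 ≤ p := le_trans hm hmp
  set f : ℝ → ℝ := fun r => 5 * r ^ (2 * p + m) - 2 * r ^ (p + m) + r ^ m + 4 * r ^ p - 4
    with hf
  have hcont : Continuous f := by fun_prop
  have hd : ∀ r : ℝ, HasDerivAt f
      (5 * (((2*p+m : ℕ) : ℝ) * r ^ (2*p+m-1)) - 2 * (((p+m : ℕ) : ℝ) * r ^ (p+m-1))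
        + (m : ℝ) * r ^ (m-1) + 4 * ((p : ℝ) * r ^ (p-1))) r := by
    intro r
    exact (((((hasDerivAt_pow (2*p+m) r).const_mul 5).sub
      ((hasDerivAt_pow (p+m) r).const_mul 2)).add (hasDerivAt_pow m r)).add
      ((hasDerivAt_pow p r).const_mul 4)).sub_const 4
  have hmono : StrictMonoOn f (Set.Icc 0 1) := by
    apply strictMonoOn_of_deriv_pos (convex_Icc 0 1) hcont.continuousOn
    intro r hr
    rw [interior_Icc] at hr
    rw [(hd r).deriv]
    exact deriv_pos_aux p m hm hmp r hr.1 hr.2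
  have h0 : f 0 = -4 := by
    simp [hf, zero_pow (by omega : 2*p+m ≠ 0), zero_pow (by omega : p+m ≠ 0),
      zero_pow (by omega : m ≠ 0), zero_pow (by omega : p ≠ 0)]
  have h1 : f 1 = 4 := by norm_num [hf]
  have hsub : Set.Ioo (f 0) (f 1) ⊆ f '' Set.Ioo 0 1 :=
    intermediate_value_Ioo (by norm_num) hcont.continuousOn
  obtain ⟨r, hr, hfr⟩ := hsub (show (0:ℝ) ∈ Set.Ioo (f 0) (f 1) by rw [h0, h1]; norm_num)
  refine ⟨r, ⟨hr, hfr⟩, ?_⟩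
  rintro s ⟨hs, hfs⟩
  exact hmono.injOn (Set.mem_Icc_of_Ioo hs) (Set.mem_Icc_of_Ioo hr)
    (by rw [show f s = 0 from hfs, hfr])
end

section
/- Let p ∈ ℕ, m ∈ ℕ₀, and let r̃ be the unique root in (0,1) of G(r) = 5r^{2p+m} − 2r^{p+m} + r^m + 4r^p − 4. Then for every x ∈ (r̃, 1) there exists a ∈ [0,1) such that a x^{p+m} + (1−a²) x^{2p+m}/(1 − x^p) > 1. -/
/-- Sharpness inequality beyond the radius `r̃_{p,m}`. -/
theorem sharpness_beyond_root (p : ℕ) (hp : 1 ≤ p) (m : ℕ)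
    (rt : ℝ) (hrt : rt ∈ Set.Ioo (0 : ℝ) 1)
    (hroot : 5 * rt ^ (2 * p + m) - 2 * rt ^ (p + m) + rt ^ m + 4 * rt ^ p - 4 = 0)
    (huniq : ∀ s ∈ Set.Ioo (0 : ℝ) 1,
      5 * s ^ (2 * p + m) - 2 * s ^ (p + m) + s ^ m + 4 * s ^ p - 4 = 0 → s = rt)
    (x : ℝ) (hx : x ∈ Set.Ioo rt 1) :
    ∃ a : ℝ, 0 ≤ a ∧ a < 1 ∧
      1 < a * x ^ (p + m) + (1 - a ^ 2) * x ^ (2 * p + m) / (1 - x ^ p) := by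
  obtain ⟨hrt0, hrt1⟩ := hrt
  obtain ⟨hxr, hx1⟩ := hx
  have hx0 : 0 < x := hrt0.trans hxr
  set g : ℝ → ℝ := fun s => 5 * s ^ (2 * p + m) - 2 * s ^ (p + m) + s ^ m + 4 * s ^ p - 4
    with hgdef
  have hgc : Continuous g := by
    simp only [hgdef]; fun_prop
  have hgx : 0 < g x := by
    rcases lt_trichotomy (g x) 0 with h | h | h
    · exfalso
      have hg1 : g 1 = 4 := by simp [hgdef]; norm_num
      have hmem : (0 : ℝ) ∈ Set.Ioo (g x) (g 1) := by
        rw [hg1]; exact ⟨h, by norm_num⟩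
      obtain ⟨c, hc, hc0⟩ := intermediate_value_Ioo (le_of_lt hx1) hgc.continuousOn hmem
      have hcrt : c = rt := huniq c ⟨hx0.trans hc.1, hc.2⟩ hc0
      linarith [hc.1]
    · exact absurd (huniq x ⟨hx0, hx1⟩ h) (by linarith)
    · exact h
  -- abbreviate t = x^p, u = x^m
  set t : ℝ := x ^ p with htdef
  set u : ℝ := x ^ m with hudef
  have ht0 : 0 < t := pow_pos hx0 p
  have ht1 : t < 1 := pow_lt_one₀ (le_of_lt hx0) hx1 (by omega)
  have hu0 : 0 < u := pow_pos hx0 m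
  have hu1 : u ≤ 1 := pow_le_one₀ (le_of_lt hx0) (le_of_lt hx1)
  have e1 : x ^ (2 * p + m) = u * t ^ 2 := by
    rw [pow_add, pow_mul, htdef, hudef]; ring
  have e2 : x ^ (p + m) = t * u := by
    rw [pow_add, htdef, hudef]
  have hG : 0 < 5 * (u * t ^ 2) - 2 * (t * u) + u + 4 * t - 4 := by
    have := hgx
    simp only [hgdef] at this
    rw [e1, e2] at this
    linarith
  have ht3 : 1 / 3 < t := by
    by_contra hcon
    push_neg at hcon
    have key : 0 < 5 * t ^ 2 - 2 * t + 1 := by nlinarith [sq_nonneg (t - 1)]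
    nlinarith [mul_nonneg (sub_nonneg.mpr hu1) (le_of_lt key)]
  refine ⟨(1 - t) / (2 * t), div_nonneg (by linarith) (by linarith), ?_, ?_⟩
  · rw [div_lt_one (by linarith)]; linarith
  · rw [e1, e2]
    have h1t : 0 < 1 - t := by linarith
    have heq : (1 - t) / (2 * t) * (t * u) + (1 - ((1 - t) / (2 * t)) ^ 2) * (u * t ^ 2) / (1 - t)
        = u * (5 * t ^ 2 - 2 * t + 1) / (4 * (1 - t)) := by
      field_simp
      ring
    rw [heq, lt_div_iff₀ (by positivity)]
    nlinarith
end
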